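/- Let A be a closed subalgebra of C(X) separating points and containing constants. Then the Šilov boundary Sh(A) meets every equivalence class of the relation ∼_A (where x ∼_A y iff every clopen H with χ_H ∈ A contains both or neither of x and y). -/
import Mathlib


open Classical Set

/-- `χ_H ∈ A`. -/
noncomputable def chiMem {X : Type*} [TopologicalSpace X]
    (A : Subalgebra ℂ C(X, ℂ)) (H : Set X) : Prop :=
  ∃ g ∈ A, ∀ x, g x = if x ∈ H then (1 : ℂ) else 0

/-- `H` is a (closed) boundary for `A`: `‖f‖_H = ‖f‖` for all `f ∈ A`. -/
noncomputable def IsBoundary {X : Type*} [TopologicalSpace X] [CompactSpace X]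
    (A : Subalgebra ℂ C(X, ℂ)) (H : Set X) : Prop :=
  IsClosed H ∧ ∀ f ∈ A, sSup ((fun x => ‖f x‖) '' H) = ‖f‖

/-- If `A ≤ C(X, ℂ)` is a closed subalgebra separating points, then the Šilov boundary
`S` of `A` meets every `∼_A`-equivalence class, where `x ∼_A y` iff every clopen `H`
with `χ_H ∈ A` contains both or neither of `x, y`. -/
theorem stmt8 {X : Type*} [TopologicalSpace X] [CompactSpace X] [T2Space X]
    (A : Subalgebra ℂ C(X, ℂ)) (hA : A.SeparatesPoints)
    (hAcl : IsClosed (A : Set C(X, ℂ)))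
    (S : Set X) (hSb : IsBoundary A S) (hSmin : ∀ T : Set X, IsBoundary A T → S ⊆ T) :
    ∀ x : X, ∃ y ∈ S, ∀ H : Set X, IsClopen H → chiMem A H → (x ∈ H ↔ y ∈ H) := by
  intro x
  by_contra hcon
  push_neg at hcon
  -- For each y ∈ S, produce a clopen H with χ_H ∈ A, x ∈ H, y ∉ H
  have key : ∀ y : S, ∃ H : Set X, IsClopen H ∧ chiMem A H ∧ x ∈ H ∧ (y : X) ∉ H := by
    rintro ⟨y, hy⟩
    obtain ⟨H, hcl, hchi, hne⟩ := hcon y hy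
    by_cases hx : x ∈ H
    · exact ⟨H, hcl, hchi, hx, by tauto⟩
    · refine ⟨Hᶜ, hcl.compl, ?_, hx, ?_⟩
      · obtain ⟨g, hg, hgval⟩ := hchi
        refine ⟨1 - g, sub_mem (Subalgebra.one_mem A) hg, fun z => ?_⟩
        have := hgval z
        by_cases hz : z ∈ H <;>
          simp [ContinuousMap.sub_apply, this, hz]
      · simp only [Set.mem_compl_iff, not_not]
        tauto
  choose H' hcl hchi hxH hyH using key
  choose g hgA hgval using hchi
  have hScompact : IsCompact S := hSb.1.isCompact
  have hcover : S ⊆ ⋃ y : S, (H' y)ᶜ := by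
    intro z hz
    exact mem_iUnion.mpr ⟨⟨z, hz⟩, hyH ⟨z, hz⟩⟩
  obtain ⟨t, ht⟩ := hScompact.elim_finite_subcover (fun y : S => (H' y)ᶜ)
    (fun y => (hcl y).isClosed.isOpen_compl) hcover
  set F : C(X, ℂ) := ∏ y ∈ t, g y with hF
  have hFA : F ∈ A := Subalgebra.prod_mem A fun y _ => hgA y
  have hFapply : ∀ z : X, F z = ∏ y ∈ t, g y z := by
    intro z
    simp [hF]
  have hFx : F x = 1 := by
    rw [hFapply]
    apply Finset.prod_eq_one
    intro y _
    rw [hgval y x, if_pos (hxH y)]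
  have hFS : ∀ z ∈ S, F z = 0 := by
    intro z hz
    obtain ⟨y, hyt, hzy⟩ := Set.mem_iUnion₂.mp (ht hz)
    rw [hFapply]
    exact Finset.prod_eq_zero hyt (by rw [hgval y z, if_neg hzy])
  have hsup : sSup ((fun z => ‖F z‖) '' S) = ‖F‖ := hSb.2 F hFA
  have h1 : (1 : ℝ) ≤ ‖F‖ := by
    calc (1 : ℝ) = ‖F x‖ := by rw [hFx]; simp
    _ ≤ ‖F‖ := F.norm_coe_le_norm x
  have h0 : sSup ((fun z => ‖F z‖) '' S) ≤ 0 := by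
    apply Real.sSup_le
    · rintro a ⟨z, hz, rfl⟩
      simp [hFS z hz]
    · exact le_rfl
  linarith
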